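/- Let P (n×ℓ) and Q (n×m) be joint probability matrices with columns sorted nonincreasingly, and let L be the n×n all-ones lower triangular matrix. Then P ≻_c Q if and only if there exists a nonnegative vector t ∈ ℝ^{ℓm} (representing the columns of an ℓ×m matrix T) satisfying the linear system Γt ≤ b, where Γ is the block matrix with m diagonal blocks −LP and a bottom block row of ℓ×ℓ identity matrices, and b stacks −Lq₁,...,−Lq_m and the all-ones ℓ-vector. (Equivalently: there exists T with nonnegative entries, row sums at most 1, and LQ ≤ LPT entrywise.) -/

import Mathlib

open Matrix Finset

/-- Row-stochastic matrix: nonnegative entries, each row sums to 1. -/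
def RowStoch {ℓ m : ℕ} (T : Matrix (Fin ℓ) (Fin m) ℝ) : Prop :=
  (∀ y w, 0 ≤ T y w) ∧ ∀ y, ∑ w, T y w = 1

/-- Doubly stochastic matrix. -/
def DStoch {n : ℕ} (D : Matrix (Fin n) (Fin n) ℝ) : Prop :=
  (∀ i j, 0 ≤ D i j) ∧ (∀ i, ∑ j, D i j = 1) ∧ (∀ j, ∑ i, D i j = 1)

/-- Conditional majorization `P ≻_c Q` via classical-conditioned random relabelings:
`Q = ∑ j, D j * P * R j` with each `D j` doubly stochastic, each `R j` entrywise
nonnegative, and `∑ j, R j` row-stochastic. -/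
def CondMaj {n ℓ m : ℕ} (P : Matrix (Fin n) (Fin ℓ) ℝ)
    (Q : Matrix (Fin n) (Fin m) ℝ) : Prop :=
  ∃ (J : ℕ) (D : Fin J → Matrix (Fin n) (Fin n) ℝ)
    (R : Fin J → Matrix (Fin ℓ) (Fin m) ℝ),
    (∀ j, DStoch (D j)) ∧ (∀ j y w, 0 ≤ R j y w) ∧
    RowStoch (∑ j, R j) ∧ Q = ∑ j, D j * P * R j

/-- Joint probability matrix: nonnegative entries summing to one. -/
def JointProb {n ℓ : ℕ} (P : Matrix (Fin n) (Fin ℓ) ℝ) : Prop :=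
  (∀ x y, 0 ≤ P x y) ∧ ∑ x, ∑ y, P x y = 1

/-- Column sum (marginal). -/
noncomputable def ColSum {n m : ℕ} (Q : Matrix (Fin n) (Fin m) ℝ) (w : Fin m) : ℝ :=
  ∑ x, Q x w
/-- The lower-triangular matrix of ones on and below the diagonal. -/
noncomputable def Lmat (n : ℕ) : Matrix (Fin n) (Fin n) ℝ :=
  Matrix.of fun i j => if j ≤ i then (1 : ℝ) else 0

/-!
A doubly stochastic matrix can only lower the prefix sums of a nonincreasing vector, so
`L D⁽ʲ⁾ P ≤ L P` entrywise and, since `R⁽ʲ⁾ ≥ 0`, `L Q ≤ L P T` for `T = ∑ R⁽ʲ⁾`.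

Conversely, moving the missing row mass of `T` into one column only enlarges `L P T` (as
`L P ≥ 0`), so `T` may be taken row-stochastic. Then `V = P T` has total mass one like `Q`, and
the prefix sums of each column `q_w` are dominated by those of `v_w`, so the column sums agree.
Since `q_w` is nonincreasing, the Hardy–Littlewood–Pólya argument (repeatedly moving mass
between two entries of `v_w`, a convex combination of the identity and a transposition) gives
a doubly stochastic `D_w` with `q_w = D_w v_w`, and `Q = ∑_w D_w P (T E_ww)` with `E_ww` a
matrix unit.
-/

theorem sum_sub_single_add_single {ι : Type*} [DecidableEq ι] (s : Finset ι) (y : ι → ℝ)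
    (j k : ι) (δ : ℝ) :
    ∑ i ∈ s, (y - Pi.single j δ + Pi.single k δ : ι → ℝ) i =
      ∑ i ∈ s, y i - (if j ∈ s then δ else 0) + (if k ∈ s then δ else 0) := by
  simp [sum_add_distrib, sum_sub_distrib, sum_pi_single']

theorem exists_doublyStochastic_mulVec_eq_sub_single_add_single {ι : Type*} [Fintype ι]
    [DecidableEq ι] (y : ι → ℝ) (j k : ι) {δ : ℝ} (hδ : 0 ≤ δ) (hδy : δ ≤ y j - y k) :
    ∃ D ∈ doublyStochastic ℝ ι, D *ᵥ y = y - Pi.single j δ + Pi.single k δ := by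
  set μ := δ / (y j - y k)
  have hμ : μ * (y j - y k) = δ := div_mul_cancel_of_imp fun h => by linarith
  have hμ0 : 0 ≤ μ := div_nonneg hδ (hδ.trans hδy)
  have hμ1 : μ ≤ 1 := div_le_one_of_le₀ hδy (hδ.trans hδy)
  refine ⟨(1 - μ) • 1 + μ • (Equiv.swap j k).permMatrix ℝ,
    convex_doublyStochastic (one_mem _) permMatrix_mem_doublyStochastic (by linarith) hμ0
      (by ring), ?_⟩
  ext i
  simp only [add_mulVec, smul_mulVec, one_mulVec, permMatrix_mulVec]
  rcases eq_or_ne i j with rfl | hij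
  · rcases eq_or_ne i k with rfl | hik
    · simp; ring
    · simp [hik]; linarith
  · rcases eq_or_ne i k with rfl | hik
    · simp [hij]; linarith
    · simp [Equiv.swap_apply_of_ne_of_ne hij hik, hij, hik]; ring

section PrefixSums

variable {ι : Type*} [LinearOrder ι] [Fintype ι] [LocallyFiniteOrderBot ι]

theorem exists_transfer_pair_of_sum_Iic_le {x y : ι → ℝ}
    (hdom : ∀ k, ∑ i ∈ Iic k, x i ≤ ∑ i ∈ Iic k, y i) (hsum : ∑ i, x i = ∑ i, y i)
    (hne : x ≠ y) :
    ∃ j k, j < k ∧ x j < y j ∧ y k < x k ∧ ∀ i < k, x i ≤ y i := by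
  have hneg : ∃ k, y k < x k := by
    by_contra! h
    exact hne (funext ((sum_eq_sum_iff_of_le fun i _ => h i).1 hsum · (mem_univ _)))
  obtain ⟨k, hk, hkmin⟩ := (univ.filter fun k => y k < x k).exists_min_image id
    (by simpa [Finset.Nonempty] using hneg)
  rw [mem_filter] at hk
  have hbelow : ∑ i ∈ Iio k, x i < ∑ i ∈ Iio k, y i := by
    have := hdom k
    rw [← Iio_insert, sum_insert notMem_Iio_self, sum_insert notMem_Iio_self] at this
    linarith [hk.2]
  obtain ⟨j, hj, hxy⟩ := exists_lt_of_sum_lt hbelow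
  refine ⟨j, k, mem_Iio.1 hj, hxy, hk.2, fun i hi => ?_⟩
  by_contra! h
  exact (hkmin i (by simpa using h)).not_gt hi

theorem exists_doublyStochastic_mulVec_eq_of_sum_Iic_le {x y : ι → ℝ} (hx : Antitone x)
    (hdom : ∀ k, ∑ i ∈ Iic k, x i ≤ ∑ i ∈ Iic k, y i) (hsum : ∑ i, x i = ∑ i, y i) :
    ∃ D ∈ doublyStochastic ℝ ι, x = D *ᵥ y := by
  induction hN : #(univ.filter fun i => x i ≠ y i) using Nat.strong_induction_on
    generalizing y with
  | _ N ih =>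
  by_cases hxy : x = y
  · exact ⟨1, one_mem _, by simp [hxy]⟩
  obtain ⟨j, k, hjk, hj, hk, hbelow⟩ := exists_transfer_pair_of_sum_Iic_le hdom hsum hxy
  -- Moving `δ` from `y j` to `y k` keeps `x` dominated and makes `y` agree with `x` at `j` or `k`.
  set δ := min (y j - x j) (x k - y k)
  have hδj : δ ≤ y j - x j := min_le_left _ _
  have hδk : δ ≤ x k - y k := min_le_right _ _
  have hδ : 0 < δ := lt_min (by linarith) (by linarith)
  obtain ⟨T, hT, hTy⟩ := exists_doublyStochastic_mulVec_eq_sub_single_add_single y j k hδ.le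
    (by linarith [hx hjk.le])
  set y' := y - Pi.single j δ + Pi.single k δ
  have hdom' : ∀ t, ∑ i ∈ Iic t, x i ≤ ∑ i ∈ Iic t, y' i := by
    intro t
    rw [sum_sub_single_add_single]
    by_cases hkt : k ≤ t
    · simp [hkt, hjk.le.trans hkt, hdom t]
    by_cases hjt : j ≤ t
    · have hgap : y j - x j ≤ ∑ i ∈ Iic t, (y i - x i) :=
        single_le_sum (fun i hi => sub_nonneg.2 <| hbelow i <| (mem_Iic.1 hi).trans_lt
          (not_le.1 hkt)) (mem_Iic.2 hjt)
      simp only [mem_Iic, hjt, hkt, if_true, if_false, sum_sub_distrib] at hgap ⊢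
      linarith
    · simp [hjt, hkt, hdom t]
  have hsum' : ∑ i, x i = ∑ i, y' i := by
    simp [y', sum_add_distrib, sum_sub_distrib, hsum]
  have hy'j : y' j = y j - δ := by simp [y', hjk.ne]
  have hy'k : y' k = y k + δ := by simp [y', hjk.ne']
  have hcard : #(univ.filter fun i => x i ≠ y' i) < N := by
    rw [← hN]
    refine card_lt_card <| (ssubset_iff_of_subset fun i => ?_).2 ?_
    · simp only [mem_filter, mem_univ, true_and]
      intro hi
      rcases eq_or_ne i j with rfl | hij
      · exact hj.ne
      rcases eq_or_ne i k with rfl | hik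
      · exact hk.ne'
      simpa [y', hij, hik] using hi
    · rcases min_cases (y j - x j) (x k - y k) with ⟨hδ', _⟩ | ⟨hδ', _⟩
      · exact ⟨j, by simp [hj.ne], by simp [hy'j, δ, hδ']⟩
      · exact ⟨k, by simp [hk.ne'], by simp [hy'k, δ, hδ']⟩
  obtain ⟨D, hD, hxD⟩ := ih _ hcard hdom' hsum' rfl
  exact ⟨D * T, mul_mem hD hT, by rw [hxD, ← hTy, mulVec_mulVec]⟩

theorem sum_Iic_mulVec_le_of_antitone {D : Matrix ι ι ℝ} (hD : D ∈ doublyStochastic ℝ ι)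
    {p : ι → ℝ} (hp : Antitone p) (k : ι) :
    ∑ i ∈ Iic k, (D *ᵥ p) i ≤ ∑ i ∈ Iic k, p i := by
  set c : ι → ℝ := fun x => ∑ i ∈ Iic k, D i x
  have hc0 : ∀ x, 0 ≤ c x := fun x => sum_nonneg fun i _ => nonneg_of_mem_doublyStochastic hD
  have hc1 : ∀ x, c x ≤ 1 := fun x => (sum_col_of_mem_doublyStochastic hD x) ▸
    sum_le_univ_sum_of_nonneg fun i => nonneg_of_mem_doublyStochastic hD
  have hcsum : ∑ x, c x = #(Iic k) := by
    simp only [c]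
    rw [sum_comm]
    simp [sum_row_of_mem_doublyStochastic hD]
  have hmulVec : ∑ i ∈ Iic k, (D *ᵥ p) i = ∑ x, c x * p x := by
    simp only [mulVec, dotProduct, c, sum_mul]
    exact sum_comm
  -- The weights `c x ∈ [0, 1]` and the indicator of `Iic k` both have total `#(Iic k)`,
  -- and `p x - p k` is nonnegative on `Iic k` and nonpositive off it.
  have hin : ∑ x ∈ Iic k, c x * (p x - p k) ≤ ∑ x ∈ Iic k, (p x - p k) :=
    sum_le_sum fun x hx => mul_le_of_le_one_left (sub_nonneg.2 (hp (mem_Iic.1 hx))) (hc1 x)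
  have hout : ∑ x ∈ (Iic k)ᶜ, c x * (p x - p k) ≤ 0 :=
    sum_nonpos fun x hx => mul_nonpos_of_nonneg_of_nonpos (hc0 x)
      (sub_nonpos.2 (hp (le_of_not_ge (by simpa using hx))))
  have hsplit := sum_add_sum_compl (Iic k) fun x => c x * (p x - p k)
  simp only [mul_sub, sum_sub_distrib, ← sum_mul, hcsum] at hin hout hsplit ⊢
  rw [hmulVec]
  simp only [sum_const, nsmul_eq_mul] at hin
  linarith

end PrefixSums

theorem dStoch_iff_mem_doublyStochastic {n : ℕ} {D : Matrix (Fin n) (Fin n) ℝ} :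
    DStoch D ↔ D ∈ doublyStochastic ℝ (Fin n) :=
  mem_doublyStochastic_iff_sum.symm

theorem Lmat_mul_apply {n m : ℕ} (A : Matrix (Fin n) (Fin m) ℝ) (k : Fin n) (w : Fin m) :
    (Lmat n * A) k w = ∑ i ∈ Iic k, A i w := by
  simp [Lmat, mul_apply, ← sum_filter, filter_ge_eq_Iic]

theorem mul_apply_le_mul_apply_of_nonneg_right {l m o : Type*} [Fintype m] {A B : Matrix l m ℝ}
    {R : Matrix m o ℝ} {i : l} {k : o} (hAB : ∀ j, A i j ≤ B i j) (hR : ∀ j, 0 ≤ R j k) :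
    (A * R) i k ≤ (B * R) i k :=
  sum_le_sum fun j _ => mul_le_mul_of_nonneg_right (hAB j) (hR j)

theorem mul_apply_le_mul_apply_of_nonneg_left {l m o : Type*} [Fintype m] {A : Matrix l m ℝ}
    {R S : Matrix m o ℝ} {i : l} {k : o} (hRS : ∀ j, R j k ≤ S j k) (hA : ∀ j, 0 ≤ A i j) :
    (A * R) i k ≤ (A * S) i k :=
  sum_le_sum fun j _ => mul_le_mul_of_nonneg_left (hRS j) (hA j)

theorem Lmat_mul_doublyStochastic_mul_le {n ℓ : ℕ} {D : Matrix (Fin n) (Fin n) ℝ}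
    (hD : D ∈ doublyStochastic ℝ (Fin n)) {P : Matrix (Fin n) (Fin ℓ) ℝ}
    (hPs : ∀ y, Antitone fun x => P x y) (k : Fin n) (y : Fin ℓ) :
    (Lmat n * D * P) k y ≤ (Lmat n * P) k y := by
  rw [Matrix.mul_assoc, Lmat_mul_apply, Lmat_mul_apply]
  exact sum_Iic_mulVec_le_of_antitone hD (hPs y) k

theorem CondMaj.exists_rowStoch_Lmat_mul_le {n ℓ m : ℕ} {P : Matrix (Fin n) (Fin ℓ) ℝ}
    {Q : Matrix (Fin n) (Fin m) ℝ} (h : CondMaj P Q) (hPs : ∀ y, Antitone fun x => P x y) :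
    ∃ T : Matrix (Fin ℓ) (Fin m) ℝ, RowStoch T ∧
      ∀ k w, (Lmat n * Q) k w ≤ (Lmat n * P * T) k w := by
  obtain ⟨J, D, R, hD, hR, hRS, rfl⟩ := h
  refine ⟨∑ j, R j, hRS, fun k w => ?_⟩
  simp only [Matrix.mul_sum, ← Matrix.mul_assoc, Matrix.sum_apply]
  exact sum_le_sum fun j _ => mul_apply_le_mul_apply_of_nonneg_right
    (Lmat_mul_doublyStochastic_mul_le (dStoch_iff_mem_doublyStochastic.1 (hD j)) hPs k)
    (hR j · w)

theorem exists_rowStoch_ge {ℓ m : ℕ} {T : Matrix (Fin ℓ) (Fin m) ℝ} (w₀ : Fin m)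
    (hT0 : ∀ y w, 0 ≤ T y w) (hT1 : ∀ y, ∑ w, T y w ≤ 1) :
    ∃ T' : Matrix (Fin ℓ) (Fin m) ℝ, RowStoch T' ∧ ∀ y w, T y w ≤ T' y w := by
  have hslack : ∀ y, 0 ≤ (Pi.single w₀ (1 - ∑ w, T y w) : Fin m → ℝ) :=
    fun y => Pi.single_nonneg.2 (sub_nonneg.2 (hT1 y))
  refine ⟨Matrix.of fun y => T y + Pi.single w₀ (1 - ∑ w, T y w), ⟨fun y w => ?_, fun y => ?_⟩,
    fun y w => ?_⟩
  · exact add_nonneg (hT0 y w) (hslack y w)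
  · simp [sum_add_distrib]
  · exact le_add_of_nonneg_right (hslack y w)

theorem exists_rowStoch_Lmat_mul_le {n ℓ m : ℕ} {P : Matrix (Fin n) (Fin ℓ) ℝ}
    {Q : Matrix (Fin n) (Fin m) ℝ} (hP : ∀ x y, 0 ≤ P x y) (w₀ : Fin m)
    {T : Matrix (Fin ℓ) (Fin m) ℝ} (hT0 : ∀ y w, 0 ≤ T y w) (hT1 : ∀ y, ∑ w, T y w ≤ 1)
    (hle : ∀ k w, (Lmat n * Q) k w ≤ (Lmat n * P * T) k w) :
    ∃ T' : Matrix (Fin ℓ) (Fin m) ℝ, RowStoch T' ∧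
      ∀ k w, (Lmat n * Q) k w ≤ (Lmat n * P * T') k w := by
  obtain ⟨T', hT', hTT'⟩ := exists_rowStoch_ge w₀ hT0 hT1
  refine ⟨T', hT', fun k w => (hle k w).trans ?_⟩
  exact mul_apply_le_mul_apply_of_nonneg_left (hTT' · w) fun y => by
    rw [Lmat_mul_apply]
    exact sum_nonneg fun x _ => hP x y

theorem sum_sum_mul_of_rowStoch {n ℓ m : ℕ} (P : Matrix (Fin n) (Fin ℓ) ℝ)
    {T : Matrix (Fin ℓ) (Fin m) ℝ} (hT : RowStoch T) :
    ∑ x, ∑ w, (P * T) x w = ∑ x, ∑ y, P x y := by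
  simp only [mul_apply]
  refine sum_congr rfl fun x _ => ?_
  rw [sum_comm]
  simp [← mul_sum, hT.2]

theorem sum_col_eq_of_Lmat_mul_le {n m : ℕ} {A B : Matrix (Fin n) (Fin m) ℝ}
    (hle : ∀ k w, (Lmat n * A) k w ≤ (Lmat n * B) k w)
    (hsum : ∑ x, ∑ w, A x w = ∑ x, ∑ w, B x w) (w : Fin m) :
    ∑ x, A x w = ∑ x, B x w := by
  have hcol : ∀ w, ∑ x, A x w ≤ ∑ x, B x w := by
    intro w
    cases n with
    | zero => simp
    | succ n => simpa [Lmat_mul_apply, ← Fin.top_eq_last] using hle (Fin.last n) w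
  have hsum' : ∑ w, ∑ x, A x w = ∑ w, ∑ x, B x w := by
    rwa [sum_comm, eq_comm, sum_comm, eq_comm]
  exact (sum_eq_sum_iff_of_le fun w _ => hcol w).1 hsum' w (mem_univ w)

theorem eq_sum_mul_mul_single {l l' o : Type*} [Fintype l'] [Fintype o] [DecidableEq o]
    {Q : Matrix l o ℝ} {V : Matrix l' o ℝ} {D : o → Matrix l l' ℝ}
    (h : ∀ w, (fun x => Q x w) = D w *ᵥ fun x => V x w) :
    Q = ∑ w, D w * V * single w w (1 : ℝ) := by
  ext x w
  rw [Matrix.sum_apply,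
    sum_eq_single w (fun w' _ hw' => mul_single_apply_of_ne _ _ _ _ _ hw'.symm _) (by simp),
    mul_single_apply_same, mul_one, congrFun (h w) x]
  rfl

theorem condMaj_of_rowStoch_Lmat_mul_le {n ℓ m : ℕ} {P : Matrix (Fin n) (Fin ℓ) ℝ}
    {Q : Matrix (Fin n) (Fin m) ℝ} (hP : JointProb P) (hQ : JointProb Q)
    (hQs : ∀ w, Antitone fun x => Q x w) {T : Matrix (Fin ℓ) (Fin m) ℝ} (hT : RowStoch T)
    (hle : ∀ k w, (Lmat n * Q) k w ≤ (Lmat n * P * T) k w) : CondMaj P Q := by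
  set V := P * T
  have hdom : ∀ k w, (Lmat n * Q) k w ≤ (Lmat n * V) k w := by
    simpa only [V, Matrix.mul_assoc] using hle
  have hcol := sum_col_eq_of_Lmat_mul_le hdom (by rw [sum_sum_mul_of_rowStoch P hT, hP.2, hQ.2])
  choose D hD hQD using fun w => exists_doublyStochastic_mulVec_eq_of_sum_Iic_le (hQs w)
    (fun k => by simpa only [Lmat_mul_apply] using hdom k w) (hcol w)
  refine ⟨m, D, fun w => T * single w w (1 : ℝ),
    fun w => dStoch_iff_mem_doublyStochastic.2 (hD w), fun w y w' => ?_, ?_, ?_⟩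
  · rcases eq_or_ne w' w with rfl | hw
    · simpa using hT.1 y w'
    · simp [hw]
  · rwa [← Matrix.mul_sum, sum_single_one, Matrix.mul_one]
  · simpa only [V, Matrix.mul_assoc] using eq_sum_mul_mul_single hQD

theorem stmt11 {n ℓ m : ℕ} (P : Matrix (Fin n) (Fin ℓ) ℝ) (Q : Matrix (Fin n) (Fin m) ℝ)
    (hP : JointProb P) (hQ : JointProb Q)
    (hPs : ∀ y, ∀ x x' : Fin n, x ≤ x' → P x' y ≤ P x y)
    (hQs : ∀ w, ∀ x x' : Fin n, x ≤ x' → Q x' w ≤ Q x w) :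
    CondMaj P Q ↔
      ∃ T : Matrix (Fin ℓ) (Fin m) ℝ,
        (∀ y w, 0 ≤ T y w) ∧ (∀ y, ∑ w, T y w ≤ 1) ∧
        ∀ k w, (Lmat n * Q) k w ≤ (Lmat n * P * T) k w := by
  constructor
  · intro h
    obtain ⟨T, hT, hle⟩ := h.exists_rowStoch_Lmat_mul_le hPs
    exact ⟨T, hT.1, fun y => (hT.2 y).le, hle⟩
  · rintro ⟨T, hT0, hT1, hle⟩
    have hm : 0 < m := Nat.pos_of_ne_zero fun hm => by subst hm; simp [JointProb] at hQ
    obtain ⟨T', hT', hle'⟩ := exists_rowStoch_Lmat_mul_le hP.1 ⟨0, hm⟩ hT0 hT1 hle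
    exact condMaj_of_rowStoch_Lmat_mul_le hP hQ hQs hT' hle'
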